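/- arXiv:1207.6802 — 7 statements merged into one kernel-verified Lean document; each statement's English description precedes it below -/
import Mathlib

section
/- Let X be a dense subspace of a topological space Y, and for an open U ⊆ X define Ex_Y U = Y \ cl_Y(X \ U). If γ is a strongly point-finite family of open subsets of X, then the family {Ex_Y U : U ∈ γ} is a strongly point-finite family of open subsets of Y. -/
/-!
Each `Ex_Y U` is open and meets `X` exactly in `U`, so `U ↦ Ex_Y U` is injective on `γ` and
a countable infinite subfamily of the extensions comes from one of `γ`. If finitely many
`U`'s have empty intersection, the corresponding (open) extensions have an open intersection
missing the dense set `X`, hence empty.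
-/

open Set

def StronglyPointFinite {α : Type*} (γ : Set (Set α)) : Prop :=
  ∀ μ ⊆ γ, μ.Countable → μ.Infinite → ∃ μ' ⊆ μ, μ'.Finite ∧ ⋂₀ μ' = ∅

theorem StronglyPointFinite.image {α β : Type*} {γ : Set (Set α)} (hγ : StronglyPointFinite γ)
    {f : Set α → Set β} (hf : InjOn f γ)
    (hempty : ∀ ν ⊆ γ, ν.Finite → ⋂₀ ν = ∅ → ⋂₀ (f '' ν) = ∅) :
    StronglyPointFinite (f '' γ) := by
  intro μ hμ hcount hinf
  obtain ⟨ν, hνγ, rfl⟩ := subset_image_iff.mp hμ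
  obtain ⟨ν', hν'ν, hν'fin, hν'⟩ :=
    hγ ν hνγ (countable_of_injective_of_countable_image (hf.mono hνγ) hcount) (hinf.of_image f)
  exact ⟨f '' ν', image_mono hν'ν, hν'fin.image f, hempty ν' (hν'ν.trans hνγ) hν'fin hν'⟩

section Extension

variable {Y : Type*} [TopologicalSpace Y] {X V : Set Y}

theorem compl_closure_diff_inter_of_isOpen (hV : IsOpen V) :
    (closure (X \ V))ᶜ ∩ X = V ∩ X := by
  ext x
  refine ⟨fun ⟨hx, hxX⟩ => ⟨by_contra fun hxV => hx (subset_closure ⟨hxX, hxV⟩), hxX⟩,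
    fun ⟨hxV, hxX⟩ => ⟨fun hcl => ?_, hxX⟩⟩
  obtain ⟨y, hyV, hyX, hyV'⟩ := mem_closure_iff.mp hcl V hV hxV
  exact hyV' hyV

theorem Dense.sInter_eq_empty_of_inter_eq_empty (hX : Dense X) {ω : Set (Set Y)}
    (hfin : ω.Finite) (hopen : ∀ W ∈ ω, IsOpen W) (h : ⋂₀ ω ∩ X = ∅) : ⋂₀ ω = ∅ := by
  by_contra hne
  obtain ⟨x, hx⟩ :=
    hX.inter_open_nonempty _ (hfin.isOpen_sInter hopen) (nonempty_iff_ne_empty.mpr hne)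
  exact (h ▸ hx : x ∈ (∅ : Set Y))

end Extension

/-- If `X` is dense in `Y` and `γ` is a strongly point-finite family of open subsets
of `X`, then `{Ex_Y U : U ∈ γ}`, where `Ex_Y U = Y \ cl_Y (X \ U)`, is a strongly
point-finite family of open subsets of `Y`. -/
theorem stmt_2 {Y : Type*} [TopologicalSpace Y] (X : Set Y) (hX : Dense X)
    (γ : Set (Set Y))
    (hopen : ∀ U ∈ γ, U ⊆ X ∧ ∃ V : Set Y, IsOpen V ∧ U = V ∩ X)
    (hspf : ∀ μ ⊆ γ, μ.Countable → μ.Infinite →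
      ∃ μ' ⊆ μ, μ'.Finite ∧ ⋂₀ μ' = ∅) :
    (∀ W ∈ (fun U => (closure (X \ U))ᶜ) '' γ, IsOpen W) ∧
      ∀ μ ⊆ (fun U => (closure (X \ U))ᶜ) '' γ, μ.Countable → μ.Infinite →
        ∃ μ' ⊆ μ, μ'.Finite ∧ ⋂₀ μ' = ∅ := by
  set ex : Set Y → Set Y := fun U => (closure (X \ U))ᶜ
  have ex_isOpen (U : Set Y) : IsOpen (ex U) := isClosed_closure.isOpen_compl
  have ex_inter {U} (hU : U ∈ γ) : ex U ∩ X = U := by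
    obtain ⟨-, V, hV, rfl⟩ := hopen U hU
    show (closure (X \ (V ∩ X)))ᶜ ∩ X = V ∩ X
    rw [sdiff_inter_self_eq_sdiff, compl_closure_diff_inter_of_isOpen hV]
  refine ⟨forall_mem_image.mpr fun U _ => ex_isOpen U, StronglyPointFinite.image hspf ?_ ?_⟩
  · intro U hU U' hU' h
    rw [← ex_inter hU, ← ex_inter hU', h]
  · intro ν hνγ hfin hν
    refine hX.sInter_eq_empty_of_inter_eq_empty (hfin.image ex)
      (forall_mem_image.mpr fun U _ => ex_isOpen U) ?_
    refine subset_empty_iff.mp (hν ▸ fun x ⟨hx, hxX⟩ U hU => ?_)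
    exact ex_inter (hνγ hU) ▸ ⟨hx _ (mem_image_of_mem ex hU), hxX⟩
end

section
/- Let X be a dense subspace of a topological space Y, and let n ∈ ℕ. If γ is a family of open subsets of X of order ≤ n (every n+2 members have empty intersection), then the family {Ex_Y U : U ∈ γ} of open subsets of Y also has order ≤ n. -/
/-!
A point of `⋂ Ex_Y U` lying in `X` lies in every `U`, since `Ex_Y U ∩ X ⊆ U`. A finite
intersection of the open sets `Ex_Y U` is open, so if it is nonempty the density of `X` provides
such a point; hence `Ex_Y` carries families with empty intersection to families with empty
intersection, and the order bound transfers.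
-/

open Set

section

variable {α β Y : Type*}

/-- `Ex_Y U`. -/
def openExtension [TopologicalSpace Y] (X U : Set Y) : Set Y := (closure (X \ U))ᶜ

def HasOrderAtMost (γ : Set (Set Y)) (n : ℕ) : Prop :=
  ∀ s : Finset (Set Y), ↑s ⊆ γ → s.card = n + 2 → ⋂₀ (s : Set (Set Y)) = ∅

theorem Finset.exists_subset_image_eq_card_eq [DecidableEq β] {f : α → β} {γ : Set α}
    {s : Finset β} (hs : ↑s ⊆ f '' γ) :
    ∃ t : Finset α, ↑t ⊆ γ ∧ t.image f = s ∧ t.card = s.card := by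
  obtain ⟨u, huγ, hbij⟩ := (show SurjOn f γ s from hs).exists_bijOn_subset
  have hfin : u.Finite := Finite.of_finite_image (hbij.image_eq ▸ s.finite_toSet) hbij.injOn
  have himage : hfin.toFinset.image f = s :=
    Finset.coe_injective (by simp only [Finset.coe_image, Finite.coe_toFinset, hbij.image_eq])
  refine ⟨hfin.toFinset, by simpa using huγ, himage, ?_⟩
  rw [← himage, Finset.card_image_of_injOn (by simpa using hbij.injOn)]

theorem HasOrderAtMost.image {γ : Set (Set Y)} {n : ℕ} (hγ : HasOrderAtMost γ n)
    {f : Set Y → Set Y}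
    (hf : ∀ t : Finset (Set Y), ↑t ⊆ γ → ⋂₀ (t : Set (Set Y)) = ∅ → ⋂₀ (f '' t) = ∅) :
    HasOrderAtMost (f '' γ) n := by
  classical
  intro s hs hcard
  obtain ⟨t, htγ, rfl, htcard⟩ := Finset.exists_subset_image_eq_card_eq hs
  rw [Finset.coe_image]
  exact hf t htγ (hγ t htγ (htcard.trans hcard))

section openExtension

variable [TopologicalSpace Y] {X : Set Y}

theorem isOpen_openExtension (X U : Set Y) : IsOpen (openExtension X U) :=
  isClosed_closure.isOpen_compl

theorem openExtension_inter_subset (X U : Set Y) : openExtension X U ∩ X ⊆ U :=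
  fun _ ⟨hxU, hxX⟩ ↦ by_contra fun hx ↦ hxU (subset_closure ⟨hxX, hx⟩)

theorem Dense.sInter_image_openExtension_eq_empty (hX : Dense X) {t : Set (Set Y)}
    (ht : t.Finite) (hempty : ⋂₀ t = ∅) : ⋂₀ (openExtension X '' t) = ∅ := by
  by_contra hne
  have hopen : IsOpen (⋂₀ (openExtension X '' t)) :=
    (ht.image _).isOpen_sInter (forall_mem_image.2 fun U _ ↦ isOpen_openExtension X U)
  obtain ⟨x, hxExt, hxX⟩ := hX.inter_open_nonempty _ hopen (nonempty_iff_ne_empty.2 hne)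
  have hx : x ∈ ⋂₀ t := fun U hU ↦
    openExtension_inter_subset X U ⟨hxExt _ (mem_image_of_mem _ hU), hxX⟩
  rwa [hempty] at hx

theorem Dense.hasOrderAtMost_image_openExtension (hX : Dense X) {γ : Set (Set Y)} {n : ℕ}
    (hγ : HasOrderAtMost γ n) : HasOrderAtMost (openExtension X '' γ) n :=
  hγ.image fun t _ ht ↦ hX.sInter_image_openExtension_eq_empty t.finite_toSet ht

end openExtension

end

theorem stmt_3_general {Y : Type*} [TopologicalSpace Y] (X : Set Y) (hX : Dense X) (n : ℕ)
    (γ : Set (Set Y))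
    (hord : ∀ s : Finset (Set Y), ↑s ⊆ γ → s.card = n + 2 →
      ⋂₀ (s : Set (Set Y)) = ∅) :
    (∀ W ∈ (fun U => (closure (X \ U))ᶜ) '' γ, IsOpen W) ∧
      ∀ s : Finset (Set Y), ↑s ⊆ (fun U => (closure (X \ U))ᶜ) '' γ →
        s.card = n + 2 → ⋂₀ (s : Set (Set Y)) = ∅ :=
  ⟨forall_mem_image.2 fun U _ ↦ isOpen_openExtension X U,
    hX.hasOrderAtMost_image_openExtension (γ := γ) hord⟩

/-- If `X` is dense in `Y` and `γ` is a family of open subsets of `X` of order `≤ n`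
(any `n+2` distinct members have empty intersection), then `{Ex_Y U : U ∈ γ}`,
where `Ex_Y U = Y \ cl_Y (X \ U)`, is a family of open subsets of `Y` of order `≤ n`. -/
theorem stmt_3 {Y : Type*} [TopologicalSpace Y] (X : Set Y) (hX : Dense X) (n : ℕ)
    (γ : Set (Set Y))
    (hopen : ∀ U ∈ γ, U ⊆ X ∧ ∃ V : Set Y, IsOpen V ∧ U = V ∩ X)
    (hord : ∀ s : Finset (Set Y), ↑s ⊆ γ → s.card = n + 2 →
      ⋂₀ (s : Set (Set Y)) = ∅) :
    (∀ W ∈ (fun U => (closure (X \ U))ᶜ) '' γ, IsOpen W) ∧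
      ∀ s : Finset (Set Y), ↑s ⊆ (fun U => (closure (X \ U))ᶜ) '' γ →
        s.card = n + 2 → ⋂₀ (s : Set (Set Y)) = ∅ :=
  stmt_3_general X hX n γ hord
end

section
/- In a compact topological space X, every point-finite family of closed subsets of X is strongly point-finite. -/
/-! By compactness, an infinite subfamily `μ` all of whose finite subfamilies meet has a common
point `x`; but then `μ` lies among the finitely many members of `α` containing `x`. -/

theorem Set.Infinite.sInter_eq_empty_of_pointFinite {X : Type*} {α μ : Set (Set X)}
    (hpf : ∀ x : X, {F ∈ α | x ∈ F}.Finite) (hμα : μ ⊆ α) (hμ : μ.Infinite) : ⋂₀ μ = ∅ := by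
  refine Set.eq_empty_of_forall_notMem fun x hx => hμ ?_
  exact (hpf x).subset fun F hF => ⟨hμα hF, hx F hF⟩

/-- In a compact topological space, every point-finite family of closed subsets
is strongly point-finite. -/
theorem stmt_7 {X : Type*} [TopologicalSpace X] [CompactSpace X]
    (α : Set (Set X)) (hcl : ∀ F ∈ α, IsClosed F)
    (hpf : ∀ x : X, {F ∈ α | x ∈ F}.Finite) :
    ∀ μ ⊆ α, μ.Countable → μ.Infinite →
      ∃ μ' ⊆ μ, μ'.Finite ∧ ⋂₀ μ' = ∅ := by
  intro μ hμα _ hμ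
  by_contra! hmeet
  have hcommon : (⋂₀ μ).Nonempty :=
    CompactSpace.nonempty_sInter (fun F hF => hcl F (hμα hF)) hmeet
  exact hcommon.ne_empty (hμ.sInter_eq_empty_of_pointFinite hpf hμα)
end

section
/- Let X be a topological space and V ⊆ X. Suppose there is a sequence (U_n)_{n≥1} of subsets with V = ⋃_n U_n, U_n ⊆ U_{n+1}, U_{2n-1} a zero-set of X and U_{2n} a cozero-set of X for all n. Then there exists a continuous function f : X → [0,1] with V = coz(f) and f⁻¹([1/2^{n-1}, 1]) = U_{2n-1} for every n ≥ 1. -/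
/-- `A` is a zero-set: `A = f ⁻¹' {0}` for some continuous `f : X → [0,1]`. -/
def IsZeroSetD {X : Type*} [TopologicalSpace X] (A : Set X) : Prop :=
  ∃ f : C(X, ℝ), (∀ x, f x ∈ Set.Icc (0 : ℝ) 1) ∧ A = f ⁻¹' {0}

/-- `A` is a cozero-set: the complement of a zero-set. -/
def IsCozSetD {X : Type*} [TopologicalSpace X] (A : Set X) : Prop :=
  ∃ f : C(X, ℝ), (∀ x, f x ∈ Set.Icc (0 : ℝ) 1) ∧ A = (f ⁻¹' {0})ᶜ

/-!
Put `Z k = U (2k+1)` and `C k = U (2k+2)`, so that `Z 0 ⊆ C 0 ⊆ Z 1 ⊆ C 1 ⊆ ⋯`. If `Z k = φ⁻¹{0}`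
and `C k = coz ψ`, then `g k = ψ / (φ + ψ)` is continuous (the denominator vanishes nowhere since
`Z k ⊆ C k`), equals `1` exactly on `Z k` and `0` exactly off `C k`. Take `f = ∑ 2^{-(k+1)} g k`.
On `Z k` every `g m` with `m ≥ k` equals `1`, so `f ≥ 2^{-k}`; off `Z k` the `g m` with `m < k`
vanish and `g k < 1`, so `f < 2^{-k}`. Finally `f x = 0` iff every `g k x = 0`, i.e. `x ∉ ⋃ C k = V`.
-/

open Set

noncomputable def dyadicSum (t : ℕ → ℝ) : ℝ := ∑' m, (2⁻¹ : ℝ) ^ (m + 1) * t m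

lemma summable_inv_two_pow_succ : Summable fun m : ℕ => (2⁻¹ : ℝ) ^ (m + 1) :=
  (summable_nat_add_iff 1).2 (summable_geometric_of_lt_one (by norm_num) (by norm_num))

lemma tsum_ite_le_inv_two_pow_succ (k : ℕ) :
    ∑' m : ℕ, (if k ≤ m then (2⁻¹ : ℝ) ^ (m + 1) else 0) = 2⁻¹ ^ k := by
  calc ∑' m : ℕ, (if k ≤ m then (2⁻¹ : ℝ) ^ (m + 1) else 0)
      = (∑' m : ℕ, if k ≤ m then (2⁻¹ : ℝ) ^ m else 0) * 2⁻¹ := by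
        rw [← tsum_mul_right]; congr 1 with m; split_ifs <;> simp [pow_succ]
    _ = 2⁻¹ ^ k := by rw [tsum_geometric_inv_two_ge]; ring

lemma summable_ite_le_inv_two_pow_succ (k : ℕ) :
    Summable fun m : ℕ => if k ≤ m then (2⁻¹ : ℝ) ^ (m + 1) else 0 :=
  summable_inv_two_pow_succ.of_nonneg_of_le (fun m => by split_ifs <;> positivity)
    (fun m => by split_ifs <;> simp)

namespace dyadicSum

variable {t : ℕ → ℝ}

lemma summable (ht : ∀ m, t m ∈ Icc (0 : ℝ) 1) :
    Summable fun m => (2⁻¹ : ℝ) ^ (m + 1) * t m :=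
  summable_inv_two_pow_succ.of_nonneg_of_le (fun m => mul_nonneg (by positivity) (ht m).1)
    (fun m => mul_le_of_le_one_right (by positivity) (ht m).2)

lemma nonneg (ht : ∀ m, t m ∈ Icc (0 : ℝ) 1) : 0 ≤ dyadicSum t :=
  tsum_nonneg fun m => mul_nonneg (by positivity) (ht m).1

lemma inv_two_pow_le (ht : ∀ m, t m ∈ Icc (0 : ℝ) 1) {k : ℕ} (hone : ∀ m, k ≤ m → t m = 1) :
    2⁻¹ ^ k ≤ dyadicSum t := by
  rw [← tsum_ite_le_inv_two_pow_succ k]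
  refine (summable_ite_le_inv_two_pow_succ k).tsum_le_tsum (fun m => ?_) (summable ht)
  split_ifs with hm
  · simp [hone m hm]
  · exact mul_nonneg (by positivity) (ht m).1

lemma le_inv_two_pow (ht : ∀ m, t m ∈ Icc (0 : ℝ) 1) {k : ℕ} (hzero : ∀ m < k, t m = 0) :
    dyadicSum t ≤ 2⁻¹ ^ k := by
  rw [← tsum_ite_le_inv_two_pow_succ k]
  refine (summable ht).tsum_le_tsum (fun m => ?_) (summable_ite_le_inv_two_pow_succ k)
  split_ifs with hm
  · exact mul_le_of_le_one_right (by positivity) (ht m).2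
  · simp [hzero m (not_le.1 hm)]

lemma le_one (ht : ∀ m, t m ∈ Icc (0 : ℝ) 1) : dyadicSum t ≤ 1 := by
  simpa using le_inv_two_pow ht (k := 0) (by simp)

lemma lt_inv_two_pow (ht : ∀ m, t m ∈ Icc (0 : ℝ) 1) {k : ℕ} (hzero : ∀ m < k, t m = 0)
    (hk : t k < 1) : dyadicSum t < 2⁻¹ ^ k := by
  rw [← tsum_ite_le_inv_two_pow_succ k]
  refine (summable ht).tsum_lt_tsum (i := k) (fun m => ?_) ?_ (summable_ite_le_inv_two_pow_succ k)
  · dsimp only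
    split_ifs with hm
    · exact mul_le_of_le_one_right (by positivity) (ht m).2
    · simp [hzero m (not_le.1 hm)]
  · simpa using mul_lt_of_lt_one_right (by positivity : (0 : ℝ) < 2⁻¹ ^ (k + 1)) hk

lemma eq_zero_iff (ht : ∀ m, t m ∈ Icc (0 : ℝ) 1) : dyadicSum t = 0 ↔ ∀ m, t m = 0 := by
  refine ⟨fun h m => ?_, fun h => by simp [dyadicSum, h]⟩
  by_contra hm
  have hpos : 0 < (2⁻¹ : ℝ) ^ (m + 1) * t m :=
    mul_pos (by positivity) (lt_of_le_of_ne (ht m).1 (Ne.symm hm))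
  exact (h ▸ (summable ht).tsum_pos (fun m => mul_nonneg (by positivity) (ht m).1) m hpos).false

lemma continuous {X : Type*} [TopologicalSpace X] {g : ℕ → X → ℝ} (hg : ∀ m, Continuous (g m))
    (hg01 : ∀ m x, g m x ∈ Icc (0 : ℝ) 1) : Continuous fun x => dyadicSum fun m => g m x := by
  refine continuous_tsum (fun m => continuous_const.mul (hg m)) summable_inv_two_pow_succ
    fun m x => ?_
  rw [Real.norm_of_nonneg (mul_nonneg (by positivity) (hg01 m x).1)]
  exact mul_le_of_le_one_right (by positivity) (hg01 m x).2

end dyadicSum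

section

variable {X : Type*} [TopologicalSpace X]

lemma IsZeroSetD.exists_preimage_one_preimage_zero_of_subset {Z C : Set X} (hZ : IsZeroSetD Z)
    (hC : IsCozSetD C) (hZC : Z ⊆ C) :
    ∃ g : C(X, ℝ), (∀ x, g x ∈ Icc (0 : ℝ) 1) ∧ g ⁻¹' {1} = Z ∧ g ⁻¹' {0} = Cᶜ := by
  obtain ⟨φ, hφ, rfl⟩ := hZ
  obtain ⟨ψ, hψ, rfl⟩ := hC
  have hden : ∀ x, 0 < φ x + ψ x := by
    intro x
    by_cases hψx : ψ x = 0
    · have hφx : φ x ≠ 0 := fun h => hZC (show x ∈ φ ⁻¹' {0} from h) hψx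
      linarith [lt_of_le_of_ne (hφ x).1 (Ne.symm hφx)]
    · linarith [(hφ x).1, lt_of_le_of_ne (hψ x).1 (Ne.symm hψx)]
  refine ⟨⟨fun x => ψ x / (φ x + ψ x), ψ.continuous.div (φ.continuous.add ψ.continuous)
    fun x => (hden x).ne'⟩, fun x => ?_, ?_, ?_⟩
  · exact ⟨div_nonneg (hψ x).1 (hden x).le, (div_le_one (hden x)).2 (by linarith [(hφ x).1])⟩
  · ext x
    simp [div_eq_one_iff_eq (hden x).ne']
  · ext x
    simp [(hden x).ne']

theorem exists_preimage_Icc_inv_two_pow_eq {Z C : ℕ → Set X} (hZ : ∀ k, IsZeroSetD (Z k))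
    (hC : ∀ k, IsCozSetD (C k)) (hZC : ∀ k, Z k ⊆ C k) (hCZ : ∀ k, C k ⊆ Z (k + 1)) :
    ∃ f : C(X, ℝ), (∀ x, f x ∈ Icc (0 : ℝ) 1) ∧ (f ⁻¹' {0})ᶜ = ⋃ k, C k ∧
      ∀ k, f ⁻¹' Icc (2⁻¹ ^ k) 1 = Z k := by
  choose g hg01 hg1 hg0 using fun k =>
    (hZ k).exists_preimage_one_preimage_zero_of_subset (hC k) (hZC k)
  have hZmono : Monotone Z := monotone_nat_of_le_succ fun k => (hZC k).trans (hCZ k)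
  have hg1_iff : ∀ k x, g k x = 1 ↔ x ∈ Z k := fun k x => Set.ext_iff.1 (hg1 k) x
  have hg0_iff : ∀ k x, g k x = 0 ↔ x ∉ C k := fun k x => Set.ext_iff.1 (hg0 k) x
  refine ⟨⟨fun x => dyadicSum fun k => g k x, dyadicSum.continuous (fun k => (g k).continuous)
    hg01⟩, fun x => ⟨dyadicSum.nonneg (hg01 · x), dyadicSum.le_one (hg01 · x)⟩, ?_, fun k => ?_⟩
  · ext x
    simp [dyadicSum.eq_zero_iff (hg01 · x), hg0_iff]
  · ext x
    refine ⟨fun hx => ?_, fun hx => ⟨dyadicSum.inv_two_pow_le (hg01 · x) fun m hm =>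
      (hg1_iff m x).2 (hZmono hm hx), dyadicSum.le_one (hg01 · x)⟩⟩
    by_contra hxZ
    have hzero : ∀ m < k, g m x = 0 := fun m hm =>
      (hg0_iff m x).2 fun hxC => hxZ (hZmono hm (hCZ m hxC))
    have hlt : g k x < 1 := lt_of_le_of_ne (hg01 k x).2 fun h => hxZ ((hg1_iff k x).1 h)
    exact (dyadicSum.lt_inv_two_pow (hg01 · x) hzero hlt).not_ge hx.1

end

/-- If `V = ⋃_{n ≥ 1} U n` with `U n ⊆ U (n+1)`, the odd-indexed `U (2n-1)` zero-sets
and the even-indexed `U (2n)` cozero-sets, then there is a continuous `f : X → [0,1]`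
with `V = coz f` and `f ⁻¹ [1/2^(n-1), 1] = U (2n-1)` for every `n ≥ 1`. -/
theorem stmt_9 {X : Type*} [TopologicalSpace X] (V : Set X) (U : ℕ → Set X)
    (hV : V = ⋃ n, ⋃ (_ : 1 ≤ n), U n)
    (hmono : ∀ n, 1 ≤ n → U n ⊆ U (n + 1))
    (hodd : ∀ n, 1 ≤ n → IsZeroSetD (U (2 * n - 1)))
    (heven : ∀ n, 1 ≤ n → IsCozSetD (U (2 * n))) :
    ∃ f : C(X, ℝ), (∀ x, f x ∈ Set.Icc (0 : ℝ) 1) ∧ V = (f ⁻¹' {0})ᶜ ∧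
      ∀ n : ℕ, 1 ≤ n → f ⁻¹' Set.Icc (1 / 2 ^ (n - 1) : ℝ) 1 = U (2 * n - 1) := by
  have hUmono : Monotone fun n => U (n + 1) := monotone_nat_of_le_succ fun n => hmono _ (by omega)
  have hodd' : ∀ k, IsZeroSetD (U (2 * k + 1)) := fun k => by
    simpa [show 2 * (k + 1) - 1 = 2 * k + 1 by omega] using hodd (k + 1) (by omega)
  have heven' : ∀ k, IsCozSetD (U (2 * k + 2)) := fun k => by
    simpa [mul_add] using heven (k + 1) (by omega)
  obtain ⟨f, hf01, hcoz, hlevel⟩ := exists_preimage_Icc_inv_two_pow_eq hodd' heven'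
    (fun k => hmono _ (by omega)) (fun k => hmono _ (by omega))
  refine ⟨f, hf01, ?_, fun n hn => ?_⟩
  · rw [hcoz, hV]
    refine subset_antisymm (iUnion₂_subset fun n hn => ?_) (iUnion_subset fun k => ?_)
    · obtain ⟨m, rfl⟩ := Nat.exists_eq_add_of_le' hn
      exact (hUmono (show m ≤ 2 * m + 1 by omega)).trans (subset_iUnion (fun k => U (2 * k + 2)) m)
    · exact subset_iUnion₂_of_subset (2 * k + 2) (by omega) subset_rfl
  · obtain ⟨k, rfl⟩ := Nat.exists_eq_add_of_le' hn
    rw [show 2 * (k + 1) - 1 = 2 * k + 1 by omega, Nat.add_sub_cancel, one_div, ← inv_pow]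
    exact hlevel k
end

section
/- Let X be a compact subspace of Σ([0,1], Γ) = {x ∈ [0,1]^Γ : {γ : x(γ) > 0} is countable}. For rational r ∈ (0,1) and γ ∈ Γ, let V_{r,γ} = {x ∈ X : x(γ) > r}. Then the family α = {V_{r,γ} : γ ∈ Γ, r ∈ ℚ ∩ (0,1)} is strongly point-countable: every ℵ₁-sized subfamily of distinct nonempty members contains a finite subfamily with empty intersection. -/
/-!
If every finite subfamily of `μ` had a point in common, compactness of `X` would give a point
`x ∈ X` in the closure of every member; the closure of `V_{r,γ}` lies in `{y | r ≤ y γ}`, so every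
index `γ` occurring in `μ` is in the countable support of `x`. Then `μ`, whose members are
determined by their pairs `(γ, r)`, is countable, contradicting `#μ = ℵ₁`.
-/

open Set

theorem IsCompact.exists_forall_mem_closure_of_finite_inter_nonempty {α : Type*}
    [TopologicalSpace α] {X : Set α} (hX : IsCompact X) {μ : Set (Set α)} (hμ : μ.Nonempty)
    (hμX : ∀ S ∈ μ, S ⊆ X) (hfip : ∀ μ' ⊆ μ, μ'.Finite → (⋂₀ μ').Nonempty) :
    ∃ x ∈ X, ∀ S ∈ μ, x ∈ closure S := by
  obtain ⟨S₀, hS₀⟩ := hμ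
  have hfin : ∀ u : Finset μ, (X ∩ ⋂ S ∈ u, closure (S : Set α)).Nonempty := by
    intro u
    -- `S₀` is thrown in so that the point found lies in `X` even when `u` is empty.
    obtain ⟨x, hx⟩ := hfip (insert S₀ (Subtype.val '' (u : Set μ)))
      (insert_subset hS₀ (Subtype.coe_image_subset _ _)) ((u.finite_toSet.image _).insert S₀)
    refine ⟨x, hμX S₀ hS₀ (hx S₀ (mem_insert _ _)), mem_iInter₂.2 fun S hS => ?_⟩
    exact subset_closure (hx S (mem_insert_of_mem _ ⟨S, hS, rfl⟩))
  obtain ⟨x, hxX, hx⟩ := hX.inter_iInter_nonempty (fun S : μ => closure (S : Set α))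
    (fun _ => isClosed_closure) hfin
  exact ⟨x, hxX, fun S hS => mem_iInter.1 hx ⟨S, hS⟩⟩

theorem closure_sep_lt_apply_subset {Γ : Type*} (X : Set (Γ → ℝ)) (γ : Γ) (r : ℝ) :
    closure {x ∈ X | r < x γ} ⊆ {x | r ≤ x γ} :=
  (closure_mono (sep_subset_ofPred X _)).trans
    (closure_lt_subset_le continuous_const (continuous_apply γ))

theorem not_countable_of_mk_eq_aleph_one {α : Type*} {s : Set α}
    (hs : Cardinal.mk s = Cardinal.aleph 1) : ¬ s.Countable := by
  rw [← Cardinal.le_aleph0_iff_set_countable, hs, not_le]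
  exact Cardinal.aleph0_lt_aleph_one

/-- Let `X` be a compact subspace of `Σ([0,1], Γ)`, the set of points of `[0,1]^Γ`
with countable support. The family `α = {V_{r,γ} : γ ∈ Γ, r ∈ ℚ ∩ (0,1)}`, where
`V_{r,γ} = {x ∈ X | x γ > r}`, is strongly point-countable: every subfamily of
cardinality `ℵ₁` consisting of nonempty sets contains a finite subfamily with
empty intersection. -/
theorem stmt_12 {Γ : Type*} (X : Set (Γ → ℝ)) (hX : IsCompact X)
    (hsub : ∀ x ∈ X, (∀ γ, x γ ∈ Set.Icc (0 : ℝ) 1) ∧ {γ | 0 < x γ}.Countable) :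
    ∀ μ ⊆ {S : Set (Γ → ℝ) | ∃ γ : Γ, ∃ r : ℚ, 0 < r ∧ (r : ℝ) < 1 ∧
        S = {x ∈ X | (r : ℝ) < x γ}},
      Cardinal.mk μ = Cardinal.aleph 1 → (∀ S ∈ μ, S.Nonempty) →
        ∃ μ' ⊆ μ, μ'.Finite ∧ ⋂₀ μ' = ∅ := by
  intro μ hμ hcard _
  by_contra! hfip
  have huncount := not_countable_of_mk_eq_aleph_one hcard
  have hμne : μ.Nonempty := nonempty_iff_ne_empty.2 fun h => huncount (h ▸ countable_empty)
  have hμX : ∀ S ∈ μ, S ⊆ X := fun S hS => by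
    obtain ⟨γ, r, -, -, rfl⟩ := hμ hS
    exact sep_subset X _
  obtain ⟨x, hxX, hx⟩ := hX.exists_forall_mem_closure_of_finite_inter_nonempty hμne hμX hfip
  refine huncount ((((hsub x hxX).2.prod countable_univ).image
    fun p : Γ × ℚ => {y ∈ X | (p.2 : ℝ) < y p.1}).mono ?_)
  intro S hS
  obtain ⟨γ, r, hr, -, rfl⟩ := hμ hS
  have hγ : 0 < x γ := (Rat.cast_pos.2 hr).trans_le (closure_sep_lt_apply_subset X γ r (hx _ hS))
  exact ⟨(γ, r), mk_mem_prod hγ trivial, rfl⟩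
end

section
/- Let X be compact Hausdorff and α a T₀-separating family of cozero-subsets of X. Suppose for every U ∈ α a family α_U = {U_i : i ∈ ℕ} of cozero-sets is given with U = ⋃_i U_i and U_i ⊆ cl(U_i) ⊆ U_{i+1} for every i. Then α* = ⋃_{U ∈ α} α_U is an F-separating family of cozero-subsets of X: whenever x ≠ y in X, there is W ∈ α* with x ∈ W and y ∉ cl(W), or vice versa. -/
theorem exists_mem_notMem_closure_of_mem_iUnion {X : Type*} [TopologicalSpace X]
    {s : ℕ → Set X} (hs : ∀ i, closure (s i) ⊆ s (i + 1)) {x y : X}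
    (hx : x ∈ ⋃ i, s i) (hy : y ∉ ⋃ i, s i) : ∃ i, x ∈ s i ∧ y ∉ closure (s i) := by
  obtain ⟨i, hi⟩ := Set.mem_iUnion.mp hx
  exact ⟨i, hi, fun h => hy (Set.mem_iUnion.mpr ⟨i + 1, hs i h⟩)⟩

theorem stmt_13_general {X : Type*} [TopologicalSpace X]
    (α : Set (Set X))
    (hT0 : ∀ x y : X, x ≠ y → ∃ U ∈ α, (x ∈ U ∧ y ∉ U) ∨ (y ∈ U ∧ x ∉ U))
    (g : Set X → ℕ → Set X)
    (hgcoz : ∀ U ∈ α, ∀ i : ℕ, IsCozSetD (g U i))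
    (hgU : ∀ U ∈ α, U = ⋃ i, g U i)
    (hgincl : ∀ U ∈ α, ∀ i : ℕ, closure (g U i) ⊆ g U (i + 1)) :
    (∀ W ∈ {W | ∃ U ∈ α, ∃ i : ℕ, W = g U i}, IsCozSetD W) ∧
      ∀ x y : X, x ≠ y → ∃ W ∈ {W | ∃ U ∈ α, ∃ i : ℕ, W = g U i},
        (x ∈ W ∧ y ∉ closure W) ∨ (y ∈ W ∧ x ∉ closure W) := by
  refine ⟨fun W ⟨U, hU, i, hW⟩ => hW ▸ hgcoz U hU i, fun x y hxy => ?_⟩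
  obtain ⟨U, hU, hsep⟩ := hT0 x y hxy
  have separate : ∀ {a b : X}, a ∈ U → b ∉ U → ∃ i, a ∈ g U i ∧ b ∉ closure (g U i) :=
    fun ha hb => exists_mem_notMem_closure_of_mem_iUnion (hgincl U hU)
      (hgU U hU ▸ ha) (hgU U hU ▸ hb)
  rcases hsep with ⟨hx, hy⟩ | ⟨hy, hx⟩
  · obtain ⟨i, hxi, hyi⟩ := separate hx hy
    exact ⟨g U i, ⟨U, hU, i, rfl⟩, .inl ⟨hxi, hyi⟩⟩
  · obtain ⟨i, hyi, hxi⟩ := separate hy hx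
    exact ⟨g U i, ⟨U, hU, i, rfl⟩, .inr ⟨hyi, hxi⟩⟩

/-- Let `X` be compact Hausdorff and `α` a `T₀`-separating family of cozero-sets.
Suppose for every `U ∈ α` a sequence `g U : ℕ → Set X` of cozero-sets is given with
`U = ⋃ i, g U i` and `g U i ⊆ cl (g U i) ⊆ g U (i+1)`. Then
`α* = {g U i : U ∈ α, i ∈ ℕ}` is an F-separating family of cozero-sets of `X`. -/
theorem stmt_13 {X : Type*} [TopologicalSpace X] [CompactSpace X] [T2Space X]
    (α : Set (Set X)) (hcoz : ∀ U ∈ α, IsCozSetD U)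
    (hT0 : ∀ x y : X, x ≠ y → ∃ U ∈ α, (x ∈ U ∧ y ∉ U) ∨ (y ∈ U ∧ x ∉ U))
    (g : Set X → ℕ → Set X)
    (hgcoz : ∀ U ∈ α, ∀ i : ℕ, IsCozSetD (g U i))
    (hgU : ∀ U ∈ α, U = ⋃ i, g U i)
    (hgincl : ∀ U ∈ α, ∀ i : ℕ, closure (g U i) ⊆ g U (i + 1)) :
    (∀ W ∈ {W | ∃ U ∈ α, ∃ i : ℕ, W = g U i}, IsCozSetD W) ∧
      ∀ x y : X, x ≠ y → ∃ W ∈ {W | ∃ U ∈ α, ∃ i : ℕ, W = g U i},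
        (x ∈ W ∧ y ∉ closure W) ∨ (y ∈ W ∧ x ∉ closure W) :=
  stmt_13_general α hT0 g hgcoz hgU hgincl
end

section
/- If Y is a metrizable topological space, then the complete Boolean algebra RC(Y) of regular closed subsets of Y has a σ-disjointed dense subset: taking a σ-discrete base B = ⋃_i B_i of Y, the family {cl(U) : U ∈ B_i}, i ∈ ℕ, is a σ-disjointed dense subset of RC(Y). -/
open Topology

section

variable {Y : Type*} [TopologicalSpace Y]

def IsDiscreteFamily (𝒰 : Set (Set Y)) : Prop :=
  ∀ y : Y, ∃ W ∈ 𝓝 y, {U | U ∈ 𝒰 ∧ (U ∩ W).Nonempty}.Subsingleton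

theorem IsOpen.closure_eq_closure_interior_closure {U : Set Y} (hU : IsOpen U) :
    closure U = closure (interior (closure U)) :=
  (closure_mono hU.subset_interior_closure).antisymm isClosed_closure.closure_interior_subset

theorem IsDiscreteFamily.disjoint_closure {𝒰 : Set (Set Y)} (h𝒰 : IsDiscreteFamily 𝒰)
    {U V : Set Y} (hU : U ∈ 𝒰) (hV : V ∈ 𝒰) (hUV : U ≠ V) :
    Disjoint (closure U) (closure V) := by
  refine Set.disjoint_left.2 fun y hyU hyV ↦ hUV ?_
  obtain ⟨W, hW, hsub⟩ := h𝒰 y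
  have hUW : (U ∩ W).Nonempty := (mem_closure_iff_nhds.1 hyU W hW).mono fun _ h ↦ ⟨h.2, h.1⟩
  have hVW : (V ∩ W).Nonempty := (mem_closure_iff_nhds.1 hyV W hW).mono fun _ h ↦ ⟨h.2, h.1⟩
  exact hsub ⟨hU, hUW⟩ ⟨hV, hVW⟩

theorem interior_nonempty_of_eq_closure_interior {F : Set Y} (hF : F = closure (interior F))
    (hne : F.Nonempty) : (interior F).Nonempty :=
  closure_nonempty_iff.1 (hF ▸ hne)

end

theorem stmt_17_general {Y : Type*} [TopologicalSpace Y]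
    (B : ℕ → Set (Set Y))
    (hopen : ∀ i, ∀ U ∈ B i, IsOpen U)
    (hdisc : ∀ i, ∀ y : Y, ∃ W ∈ nhds y, {U | U ∈ B i ∧ (U ∩ W).Nonempty}.Subsingleton)
    (hbase : ∀ W : Set Y, IsOpen W → ∀ y ∈ W, ∃ i, ∃ U ∈ B i, y ∈ U ∧ U ⊆ W) :
    (∀ i, ∀ U ∈ B i, closure U = closure (interior (closure U))) ∧
      (∀ i, ∀ U ∈ B i, ∀ V ∈ B i, closure U ≠ closure V →
        interior (closure U ∩ closure V) = ∅) ∧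
      ∀ F : Set Y, F = closure (interior F) → F.Nonempty →
        ∃ i, ∃ U ∈ B i, (closure U).Nonempty ∧ closure U ⊆ F := by
  refine ⟨fun i U hU ↦ (hopen i U hU).closure_eq_closure_interior_closure, ?_, ?_⟩
  · intro i U hU V hV hne
    have hUV : U ≠ V := fun h ↦ hne (h ▸ rfl)
    rw [(IsDiscreteFamily.disjoint_closure (hdisc i) hU hV hUV).inter_eq, interior_empty]
  · intro F hF hne
    obtain ⟨y, hy⟩ := interior_nonempty_of_eq_closure_interior hF hne
    obtain ⟨i, U, hU, hyU, hUF⟩ := hbase (interior F) isOpen_interior y hy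
    exact ⟨i, U, hU, ⟨y, subset_closure hyU⟩, hF ▸ closure_mono hUF⟩

/-- For a metrizable space `Y` with a σ-discrete base `B = ⋃ i, B i`, the family
`{cl U : U ∈ B i}`, `i ∈ ℕ`, is a σ-disjointed dense subset of the Boolean algebra
`RC(Y)` of regular closed sets: its members are regular closed, distinct members at
each level have meet `0` (i.e. `int (cl U ∩ cl V) = ∅`), and every nonempty regular
closed set contains a nonempty member. -/
theorem stmt_17 {Y : Type*} [TopologicalSpace Y] [TopologicalSpace.MetrizableSpace Y]
    (B : ℕ → Set (Set Y))
    (hopen : ∀ i, ∀ U ∈ B i, IsOpen U)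
    (hdisc : ∀ i, ∀ y : Y, ∃ W ∈ nhds y, {U | U ∈ B i ∧ (U ∩ W).Nonempty}.Subsingleton)
    (hbase : ∀ W : Set Y, IsOpen W → ∀ y ∈ W, ∃ i, ∃ U ∈ B i, y ∈ U ∧ U ⊆ W) :
    (∀ i, ∀ U ∈ B i, closure U = closure (interior (closure U))) ∧
      (∀ i, ∀ U ∈ B i, ∀ V ∈ B i, closure U ≠ closure V →
        interior (closure U ∩ closure V) = ∅) ∧
      ∀ F : Set Y, F = closure (interior F) → F.Nonempty →
        ∃ i, ∃ U ∈ B i, (closure U).Nonempty ∧ closure U ⊆ F :=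
  stmt_17_general B hopen hdisc hbase
end
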